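/- Assume β = δ = 0 and α = γτ². Define the weight π(η) := τ^{2 Σ_{j=1}^L j η_j} for each configuration η ∈ {0,1}^L. Then the open ASEP is reversible with respect to π: for all configurations η, η' ∈ {0,1}^L, π(η)·⟨e_{η'}, 𝓛 e_η⟩ = π(η')·⟨e_η, 𝓛 e_{η'}⟩. -/
import Mathlib


open Matrix Complex

noncomputable section

/-- A particle configuration on `L` sites: each site is a hole (`0`) or a particle (`1`). -/
abbrev Conf (L : ℕ) := Fin L → Fin 2

/-- The 2×2 matrix `A` acting on the `j`-th tensor factor (0-based index) of `(ℂ²)^{⊗L}`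
and the identity elsewhere.  (For `j ≥ L` this is the identity.) -/
def site (L : ℕ) (A : Matrix (Fin 2) (Fin 2) ℂ) (j : ℕ) :
    Matrix (Conf L) (Conf L) ℂ :=
  Matrix.of fun η' η =>
    if h : j < L then
      A (η' ⟨j, h⟩) (η ⟨j, h⟩) *
        ∏ k ∈ Finset.univ.erase (⟨j, h⟩ : Fin L), (if η' k = η k then (1 : ℂ) else 0)
    else (if η' = η then (1 : ℂ) else 0)

def sigmaPlus : Matrix (Fin 2) (Fin 2) ℂ := !![0, 1; 0, 0]
def sigmaMinus : Matrix (Fin 2) (Fin 2) ℂ := !![0, 0; 1, 0]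
def numOp : Matrix (Fin 2) (Fin 2) ℂ := !![0, 0; 0, 1]
def sigmaX : Matrix (Fin 2) (Fin 2) ℂ := !![0, 1; 1, 0]
def sigmaY : Matrix (Fin 2) (Fin 2) ℂ := !![0, -Complex.I; Complex.I, 0]
def sigmaZ : Matrix (Fin 2) (Fin 2) ℂ := !![1, 0; 0, -1]

/-- The open ASEP generator `𝓛` on `L` sites with bulk rates `p` (right), `q` (left),
left-boundary entry/exit rates `α, γ` and right-boundary entry/exit rates `δ, β`.
Lattice sites are 0-based, so site `1` of the paper is index `0` and site `L` is `L-1`. -/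
def asepGen (L : ℕ) (p q α β γ δ : ℝ) : Matrix (Conf L) (Conf L) ℂ :=
  (-((Real.sqrt (p * q) : ℝ) : ℂ)) •
    (∑ j ∈ Finset.range (L - 1),
      (((Real.sqrt (p / q) : ℝ) : ℂ)⁻¹ •
          (site L sigmaMinus j * site L sigmaPlus (j + 1)
            - site L (1 - numOp) j * site L numOp (j + 1))
        + ((Real.sqrt (p / q) : ℝ) : ℂ) •
          (site L sigmaMinus (j + 1) * site L sigmaPlus j
            - site L numOp j * site L (1 - numOp) (j + 1))))
  - (α : ℂ) • (site L sigmaMinus 0 - 1 + site L numOp 0)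
  - (γ : ℂ) • (site L sigmaPlus 0 - site L numOp 0)
  - (δ : ℂ) • (site L sigmaMinus (L - 1) - 1 + site L numOp (L - 1))
  - (β : ℂ) • (site L sigmaPlus (L - 1) - site L numOp (L - 1))

/-- The diagonal matrix `V` acting on a configuration basis vector `e_η` by
`τ^{-Σ_j j η_j}` (with 1-based site labels as in the paper). -/
def Vmat (L : ℕ) (τ : ℂ) : Matrix (Conf L) (Conf L) ℂ :=
  Matrix.diagonal fun η : Conf L =>
    τ ^ (-(∑ j : Fin L, (((j : ℕ) : ℤ) + 1) * ((η j : ℕ) : ℤ)))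

namespace AsepAux
open Finset

variable {L : ℕ}

def dlt (η' η : Conf L) (k : Fin L) : ℂ := if η' k = η k then 1 else 0

lemma site_apply' (A : Matrix (Fin 2) (Fin 2) ℂ) (a : ℕ) (ha : a < L) (η' η : Conf L) :
    site L A a η' η = A (η' ⟨a, ha⟩) (η ⟨a, ha⟩) * ∏ k ∈ univ.erase ⟨a, ha⟩, dlt η' η k := by
  simp [site, dlt, ha]

lemma one_entry (η' η : Conf L) :
    (1 : Matrix (Conf L) (Conf L) ℂ) η' η = ∏ k, dlt η' η k := by
  rw [Matrix.one_apply]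
  by_cases h : η' = η
  · subst h; simp [dlt]
  · rw [if_neg h]
    obtain ⟨k, hk⟩ := Function.ne_iff.1 h
    exact (Finset.prod_eq_zero (mem_univ k) (by simp [dlt, hk])).symm

lemma site_mul_site (A B : Matrix (Fin 2) (Fin 2) ℂ) (a b : ℕ) (ha : a < L) (hb : b < L)
    (hab : a ≠ b) (η' η : Conf L) :
    (site L A a * site L B b) η' η =
      A (η' ⟨a, ha⟩) (η ⟨a, ha⟩) * B (η' ⟨b, hb⟩) (η ⟨b, hb⟩) *
        ∏ k ∈ (univ.erase ⟨a, ha⟩).erase ⟨b, hb⟩, dlt η' η k := by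
  set i : Fin L := ⟨a, ha⟩ with hi
  set i' : Fin L := ⟨b, hb⟩ with hi'
  have hii' : i ≠ i' := by simp [hi, hi', Fin.ext_iff, hab]
  rw [Matrix.mul_apply]
  rw [Finset.sum_eq_single (Function.update η' i (η i))]
  · rw [site_apply' A a ha, site_apply' B b hb]
    have h2 : ∀ k : Fin L, k ≠ i → Function.update η' i (η i) k = η' k :=
      fun k hk => Function.update_of_ne hk _ _
    have e1 : ∏ k ∈ univ.erase i, dlt η' (Function.update η' i (η i)) k = 1 :=
      Finset.prod_eq_one fun k hk => by simp [dlt, h2 k (mem_erase.1 hk).1]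
    have e2 : ∏ k ∈ univ.erase i', dlt (Function.update η' i (η i)) η k =
        ∏ k ∈ (univ.erase i').erase i, dlt η' η k := by
      rw [← Finset.mul_prod_erase _ _ (mem_erase.2 ⟨hii', mem_univ i⟩)]
      have : dlt (Function.update η' i (η i)) η i = 1 := by simp [dlt]
      rw [this, one_mul]
      exact Finset.prod_congr rfl fun k hk => by
        simp [dlt, h2 k (mem_erase.1 hk).1]
    rw [Function.update_self, e1, e2, Finset.erase_right_comm]
    have : Function.update η' i (η i) i' = η' i' := h2 i' (Ne.symm hii')
    rw [this]; ring
  · intro ζ _ hζ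
    by_cases hz : ∀ k, k ≠ i → ζ k = η' k
    · have hzi : ζ i ≠ η i := by
        intro h
        apply hζ
        funext k
        by_cases hk : k = i
        · subst hk; rw [Function.update_self, h]
        · rw [Function.update_of_ne hk, hz k hk]
      rw [site_apply' B b hb]
      have : ∏ k ∈ univ.erase i', dlt ζ η k = 0 :=
        Finset.prod_eq_zero (mem_erase.2 ⟨hii', mem_univ i⟩) (by simp [dlt, hzi])
      rw [this]
      ring
    · push_neg at hz
      obtain ⟨k, hk, hne⟩ := hz
      rw [site_apply' A a ha]
      have : ∏ k' ∈ univ.erase i, dlt η' ζ k' = 0 :=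
        Finset.prod_eq_zero (mem_erase.2 ⟨hk, mem_univ k⟩)
          (by simp [dlt]; exact fun h => hne h.symm)
      rw [this]
      ring
  · intro h; exact absurd (mem_univ _) h

lemma site_mul_site' (A B : Matrix (Fin 2) (Fin 2) ℂ) (a b : ℕ) (ha : a < L) (hb : b < L)
    (hab : a ≠ b) (η' η : Conf L) :
    (site L A a * site L B b) η' η =
      A (η' ⟨a, ha⟩) (η ⟨a, ha⟩) * B (η' ⟨b, hb⟩) (η ⟨b, hb⟩) *
        ∏ k ∈ (univ.erase ⟨b, hb⟩).erase ⟨a, ha⟩, dlt η' η k := by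
  rw [site_mul_site A B a b ha hb hab, Finset.erase_right_comm]

lemma ltA (j : Fin (L - 1)) : j.1 < L := lt_of_lt_of_le j.2 (Nat.sub_le _ _)
lemma ltB (j : Fin (L - 1)) : j.1 + 1 < L := Nat.add_lt_of_lt_sub j.2

def Fterm (τc : ℂ) (η' η : Conf L) (i i' : Fin L) : ℂ :=
  (τc⁻¹ * (sigmaMinus (η' i) (η i) * sigmaPlus (η' i') (η i')
      - (1 - numOp) (η' i) (η i) * numOp (η' i') (η i'))
    + τc * (sigmaMinus (η' i') (η i') * sigmaPlus (η' i) (η i)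
      - numOp (η' i) (η i) * (1 - numOp) (η' i') (η i'))) *
  ∏ k ∈ (univ.erase i).erase i', dlt η' η k

def Gterm (a g : ℂ) (η' η : Conf L) (z : Fin L) : ℂ :=
  (a * (sigmaMinus (η' z) (η z) - dlt η' η z + numOp (η' z) (η z))
    + g * (sigmaPlus (η' z) (η z) - numOp (η' z) (η z))) *
  ∏ k ∈ univ.erase z, dlt η' η k

lemma asepGen_apply (hL : 1 ≤ L) (p q α γ : ℝ) (η' η : Conf L) :
    asepGen L p q α 0 γ 0 η' η =
      (-((Real.sqrt (p * q) : ℝ) : ℂ)) *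
          ∑ j : Fin (L - 1),
            Fterm (((Real.sqrt (p / q) : ℝ)) : ℂ) η' η ⟨j.1, ltA j⟩ ⟨j.1 + 1, ltB j⟩
        - Gterm (α : ℂ) (γ : ℂ) η' η ⟨0, hL⟩ := by
  simp only [asepGen, Complex.ofReal_zero, zero_smul, sub_zero]
  rw [sub_sub]
  rw [Matrix.sub_apply, Matrix.smul_apply, Matrix.sum_apply]
  congr 1
  · rw [smul_eq_mul]
    congr 1
    rw [← Fin.sum_univ_eq_sum_range]
    refine Finset.sum_congr rfl fun j _ => ?_
    rw [Matrix.add_apply, Matrix.smul_apply, Matrix.smul_apply, Matrix.sub_apply,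
      Matrix.sub_apply,
      site_mul_site sigmaMinus sigmaPlus j.1 (j.1 + 1) (ltA j) (ltB j) (by omega),
      site_mul_site (1 - numOp) numOp j.1 (j.1 + 1) (ltA j) (ltB j) (by omega),
      site_mul_site' sigmaMinus sigmaPlus (j.1 + 1) j.1 (ltB j) (ltA j) (by omega),
      site_mul_site numOp (1 - numOp) j.1 (j.1 + 1) (ltA j) (ltB j) (by omega)]
    simp only [Fterm, smul_eq_mul]
    ring
  · rw [Matrix.add_apply, Matrix.smul_apply, Matrix.smul_apply, Matrix.add_apply,
      Matrix.sub_apply, Matrix.sub_apply,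
      site_apply' sigmaMinus 0 hL, site_apply' numOp 0 hL, site_apply' sigmaPlus 0 hL,
      one_entry, ← Finset.mul_prod_erase Finset.univ (dlt η' η) (Finset.mem_univ ⟨0, hL⟩)]
    simp only [Gterm, smul_eq_mul]
    ring

lemma fin2 (v : Fin 2) : v = 0 ∨ v = 1 := by fin_cases v <;> simp

lemma sum_split (i i' : Fin L) (hii' : i ≠ i') (f : Fin L → ℕ) :
    ∑ k : Fin L, f k = f i + (f i' + ∑ k ∈ (univ.erase i).erase i', f k) := by
  rw [← Finset.add_sum_erase _ _ (mem_univ i),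
    ← Finset.add_sum_erase _ _ (mem_erase.2 ⟨Ne.symm hii', mem_univ i'⟩)]

lemma pi_swap (τc : ℂ) (π : Conf L → ℂ)
    (hπ : ∀ ζ : Conf L, π ζ = τc ^ (2 * ∑ j : Fin L, ((j : ℕ) + 1) * ((ζ j : ℕ))))
    (η η' : Conf L) (i i' : Fin L) (hii' : (i' : ℕ) = (i : ℕ) + 1)
    (hoff : ∀ k, k ≠ i → k ≠ i' → η k = η' k)
    (h1 : η i = 0) (h2 : η i' = 1) (h3 : η' i = 1) (h4 : η' i' = 0) :
    π η = π η' * τc ^ 2 := by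
  have hne : i ≠ i' := fun h => by rw [h] at hii'; omega
  rw [hπ η, hπ η', ← pow_add]
  congr 1
  rw [sum_split i i' hne, sum_split i i' hne]
  have hrest : ∑ k ∈ (univ.erase i).erase i', ((k : ℕ) + 1) * ((η k : ℕ)) =
      ∑ k ∈ (univ.erase i).erase i', ((k : ℕ) + 1) * ((η' k : ℕ)) :=
    Finset.sum_congr rfl fun k hk => by
      rw [hoff k (mem_erase.1 (mem_erase.1 hk).2).1 (mem_erase.1 hk).1]
  rw [h1, h2, h3, h4, hrest]
  simp only [Fin.val_zero, Fin.val_one]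
  omega

lemma pi_bdry (τc : ℂ) (π : Conf L → ℂ)
    (hπ : ∀ ζ : Conf L, π ζ = τc ^ (2 * ∑ j : Fin L, ((j : ℕ) + 1) * ((ζ j : ℕ))))
    (η η' : Conf L) (z : Fin L) (hz : (z : ℕ) = 0)
    (hoff : ∀ k, k ≠ z → η k = η' k) (h1 : η z = 0) (h2 : η' z = 1) :
    π η * τc ^ 2 = π η' := by
  rw [hπ η, hπ η', ← pow_add]
  congr 1
  rw [← Finset.add_sum_erase _ _ (mem_univ z),
    ← Finset.add_sum_erase _ (fun k : Fin L => ((k : ℕ) + 1) * ((η' k : ℕ))) (mem_univ z)]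
  have hrest : ∑ k ∈ univ.erase z, ((k : ℕ) + 1) * ((η k : ℕ)) =
      ∑ k ∈ univ.erase z, ((k : ℕ) + 1) * ((η' k : ℕ)) :=
    Finset.sum_congr rfl fun k hk => by rw [hoff k (mem_erase.1 hk).1]
  rw [h1, h2, hrest, hz]
  simp only [Fin.val_zero, Fin.val_one]
  omega

end AsepAux

open AsepAux Finset in
/-- **reversibility.**  With `β = δ = 0` and `α = γτ²`, the open ASEP is
reversible with respect to the weight `π(η) = τ^{2 Σ_j j η_j}`:
`π(η) ⟨e_{η'}, 𝓛 e_η⟩ = π(η') ⟨e_η, 𝓛 e_{η'}⟩` for all configurations `η, η'`. -/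
theorem asep_reversible (L : ℕ) (hL : 1 ≤ L) (p q α β γ δ : ℝ)
    (hp : 0 < p) (hq : 0 < q)
    (hα : 0 ≤ α) (hβ : 0 ≤ β) (hγ : 0 ≤ γ) (hδ : 0 ≤ δ)
    (hβ0 : β = 0) (hδ0 : δ = 0)
    (τ : ℝ) (hτ : τ = Real.sqrt (p / q))
    (hαγ : α = γ * τ ^ 2)
    (π : Conf L → ℂ)
    (hπ : ∀ η : Conf L,
      π η = (τ : ℂ) ^ (2 * ∑ j : Fin L, ((j : ℕ) + 1) * ((η j : ℕ)))) :
    ∀ η η' : Conf L,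
      π η * asepGen L p q α β γ δ η' η = π η' * asepGen L p q α β γ δ η η' := by
  intro η η'
  subst hβ0 hδ0
  have hτpos : (0 : ℝ) < τ := hτ ▸ Real.sqrt_pos.2 (div_pos hp hq)
  have hτcne : (τ : ℂ) ≠ 0 := by
    simpa using Complex.ofReal_ne_zero.2 hτpos.ne'
  have hαc : (α : ℂ) = (γ : ℂ) * (τ : ℂ) ^ 2 := by rw [hαγ]; push_cast; ring
  rw [asepGen_apply hL p q α γ η' η, asepGen_apply hL p q α γ η η', ← hτ]
  have hF : ∀ j : Fin (L - 1),
      π η * Fterm (τ : ℂ) η' η ⟨j.1, ltA j⟩ ⟨j.1 + 1, ltB j⟩ =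
      π η' * Fterm (τ : ℂ) η η' ⟨j.1, ltA j⟩ ⟨j.1 + 1, ltB j⟩ := by
    intro j
    set i : Fin L := ⟨j.1, ltA j⟩ with hidef
    set i' : Fin L := ⟨j.1 + 1, ltB j⟩ with hi'def
    have hne : i ≠ i' := by simp [hidef, hi'def, Fin.ext_iff]
    simp only [Fterm]
    by_cases hP : ∀ k, k ≠ i → k ≠ i' → η' k = η k
    · have hP1 : ∏ k ∈ (univ.erase i).erase i', dlt η' η k = 1 :=
        Finset.prod_eq_one fun k hk => by
          simp [dlt, hP k (mem_erase.1 (mem_erase.1 hk).2).1 (mem_erase.1 hk).1]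
      have hP1' : ∏ k ∈ (univ.erase i).erase i', dlt η η' k = 1 :=
        Finset.prod_eq_one fun k hk => by
          simp [dlt, (hP k (mem_erase.1 (mem_erase.1 hk).2).1 (mem_erase.1 hk).1).symm]
      rw [hP1, hP1', mul_one, mul_one]
      rcases fin2 (η i) with h1 | h1 <;> rcases fin2 (η i') with h2 | h2 <;>
        rcases fin2 (η' i) with h3 | h3 <;> rcases fin2 (η' i') with h4 | h4 <;>
        rw [h1, h2, h3, h4] <;>
        try (norm_num [sigmaMinus, sigmaPlus, numOp, Matrix.sub_apply, Matrix.one_apply]; done)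
      -- remaining: (0,1,0,1) diag, (0,1,1,0) swap, (1,0,0,1) swap, (1,0,1,0) diag
      · have heq : η = η' := funext fun k => by
          rcases eq_or_ne k i with rfl | hki
          · rw [h1, h3]
          · rcases eq_or_ne k i' with rfl | hki'
            · rw [h2, h4]
            · exact (hP k hki hki').symm
        rw [heq]
      · have key : π η = π η' * (τ : ℂ) ^ 2 :=
          pi_swap (τ : ℂ) π hπ η η' i i' rfl
            (fun k hk hk' => (hP k hk hk').symm) h1 h2 h3 h4
        rw [key]
        norm_num [sigmaMinus, sigmaPlus, numOp, Matrix.sub_apply, Matrix.one_apply]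
        field_simp
      · have key : π η' = π η * (τ : ℂ) ^ 2 :=
          pi_swap (τ : ℂ) π hπ η' η i i' rfl
            (fun k hk hk' => hP k hk hk') h3 h4 h1 h2
        rw [key]
        norm_num [sigmaMinus, sigmaPlus, numOp, Matrix.sub_apply, Matrix.one_apply]
        field_simp
      · have heq : η = η' := funext fun k => by
          rcases eq_or_ne k i with rfl | hki
          · rw [h1, h3]
          · rcases eq_or_ne k i' with rfl | hki'
            · rw [h2, h4]
            · exact (hP k hki hki').symm
        rw [heq]
    · push_neg at hP
      obtain ⟨k, hk1, hk2, hk3⟩ := hP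
      have hmem : k ∈ (univ.erase i).erase i' :=
        mem_erase.2 ⟨hk2, mem_erase.2 ⟨hk1, mem_univ k⟩⟩
      have z1 : ∏ k' ∈ (univ.erase i).erase i', dlt η' η k' = 0 :=
        Finset.prod_eq_zero hmem (by simp [dlt, hk3])
      have z2 : ∏ k' ∈ (univ.erase i).erase i', dlt η η' k' = 0 :=
        Finset.prod_eq_zero hmem (by simp [dlt]; exact fun h => hk3 h.symm)
      rw [z1, z2]
      ring
  have hG : π η * Gterm (α : ℂ) (γ : ℂ) η' η ⟨0, hL⟩ =
      π η' * Gterm (α : ℂ) (γ : ℂ) η η' ⟨0, hL⟩ := by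
    set z : Fin L := ⟨0, hL⟩ with hzdef
    simp only [Gterm]
    by_cases hP : ∀ k, k ≠ z → η' k = η k
    · have hP1 : ∏ k ∈ univ.erase z, dlt η' η k = 1 :=
        Finset.prod_eq_one fun k hk => by simp [dlt, hP k (mem_erase.1 hk).1]
      have hP1' : ∏ k ∈ univ.erase z, dlt η η' k = 1 :=
        Finset.prod_eq_one fun k hk => by simp [dlt, (hP k (mem_erase.1 hk).1).symm]
      rw [hP1, hP1', mul_one, mul_one]
      rcases fin2 (η z) with h1 | h1 <;> rcases fin2 (η' z) with h2 | h2 <;>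
        simp only [dlt, h1, h2]
      · have heq : η = η' := funext fun k => by
          rcases eq_or_ne k z with rfl | hkz
          · rw [h1, h2]
          · exact (hP k hkz).symm
        rw [heq]
      · have key : π η * (τ : ℂ) ^ 2 = π η' :=
          pi_bdry (τ : ℂ) π hπ η η' z rfl (fun k hk => (hP k hk).symm) h1 h2
        norm_num [sigmaMinus, sigmaPlus, numOp, hαc]
        linear_combination (γ : ℂ) * key
      · have key : π η' * (τ : ℂ) ^ 2 = π η :=
          pi_bdry (τ : ℂ) π hπ η' η z rfl (fun k hk => hP k hk) h2 h1
        norm_num [sigmaMinus, sigmaPlus, numOp, hαc]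
        linear_combination (-(γ : ℂ)) * key
      · have heq : η = η' := funext fun k => by
          rcases eq_or_ne k z with rfl | hkz
          · rw [h1, h2]
          · exact (hP k hkz).symm
        rw [heq]
    · push_neg at hP
      obtain ⟨k, hk1, hk3⟩ := hP
      have hmem : k ∈ univ.erase z := mem_erase.2 ⟨hk1, mem_univ k⟩
      have z1 : ∏ k' ∈ univ.erase z, dlt η' η k' = 0 :=
        Finset.prod_eq_zero hmem (by simp [dlt, hk3])
      have z2 : ∏ k' ∈ univ.erase z, dlt η η' k' = 0 :=
        Finset.prod_eq_zero hmem (by simp [dlt]; exact fun h => hk3 h.symm)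
      rw [z1, z2]
      ring
  have hSum : π η * ∑ j : Fin (L - 1), Fterm (τ : ℂ) η' η ⟨j.1, ltA j⟩ ⟨j.1 + 1, ltB j⟩ =
      π η' * ∑ j : Fin (L - 1), Fterm (τ : ℂ) η η' ⟨j.1, ltA j⟩ ⟨j.1 + 1, ltB j⟩ := by
    rw [Finset.mul_sum, Finset.mul_sum]
    exact Finset.sum_congr rfl fun j _ => hF j
  linear_combination (-((Real.sqrt (p * q) : ℝ) : ℂ)) * hSum - hG
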